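/- arXiv:1711.00765 — 3 statements merged into one kernel-verified Lean document; each statement's English description precedes it below -/
import Mathlib

section
/- Let p* be the minimizer over polynomials p of total degree ≤ m in d variables of the weighted least-squares cost Σᵢ (p(xᵢ) - fᵢ)² wᵢ with positive weights wᵢ, assuming the associated least-squares matrix is invertible. Then the evaluation p*(0) equals Σᵢ aᵢ fᵢ, where the coefficients aᵢ minimize Σᵢ aᵢ²/wᵢ subject to the constraints Σᵢ aᵢ b(xᵢ) = b(0) for every polynomial b of total degree ≤ m. -/
/-!
Both problems are quadratic minimisations over an affine set, so each minimiser is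
characterised by a first-order orthogonality condition. For the primal problem, the
weighted residual `rᵢ wᵢ = (p(xᵢ) - fᵢ) wᵢ` annihilates every `b ∈ Π_m^d`, so
it is an admissible direction for the dual problem; orthogonality of the dual minimiser
`a` to it gives `∑ aᵢ rᵢ = 0`. Hence `p(0) = ∑ aᵢ p(xᵢ) = ∑ aᵢ fᵢ + ∑ aᵢ rᵢ = ∑ aᵢ fᵢ`.
-/

open MvPolynomial Matrix Finset

theorem sum_mul_mul_eq_zero_of_forall_sum_sq_mul_le {ι : Type*} [Fintype ι] (c u v : ι → ℝ)
    (h : ∀ t : ℝ, ∑ i, u i ^ 2 * c i ≤ ∑ i, (u i + t * v i) ^ 2 * c i) :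
    ∑ i, u i * v i * c i = 0 := by
  have hquad : ∀ t : ℝ,
      0 ≤ (∑ i, v i ^ 2 * c i) * (t * t) + 2 * (∑ i, u i * v i * c i) * t + 0 := by
    intro t
    have hexpand : ∑ i, (u i + t * v i) ^ 2 * c i = ∑ i, u i ^ 2 * c i +
        ((∑ i, v i ^ 2 * c i) * (t * t) + 2 * (∑ i, u i * v i * c i) * t) := by
      simp only [sum_mul, mul_sum, ← sum_add_distrib]
      exact sum_congr rfl fun i _ => by ring
    linarith [h t]
  have hdiscr := discrim_le_zero hquad
  rw [discrim] at hdiscr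
  nlinarith [sq_nonneg (∑ i, u i * v i * c i)]

section LeastSquares

variable {σ ι : Type*} [Fintype ι] {V : Submodule ℝ (MvPolynomial σ ℝ)} {x : ι → σ → ℝ}

theorem sum_residual_mul_mul_eval_eq_zero {f w : ι → ℝ} {p : MvPolynomial σ ℝ} (hp : p ∈ V)
    (hpmin : ∀ q ∈ V,
      ∑ i, (eval (x i) p - f i) ^ 2 * w i ≤ ∑ i, (eval (x i) q - f i) ^ 2 * w i)
    {q : MvPolynomial σ ℝ} (hq : q ∈ V) :
    ∑ i, (eval (x i) p - f i) * w i * eval (x i) q = 0 := by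
  rw [← sum_mul_mul_eq_zero_of_forall_sum_sq_mul_le w (fun i => eval (x i) p - f i)
    (fun i => eval (x i) q) fun t => ?_]
  · exact sum_congr rfl fun i _ => by ring
  convert hpmin (p + t • q) (V.add_mem hp (V.smul_mem t hq)) using 3 with i
  simp only [eval_add, smul_eval]
  ring

theorem sum_mul_div_eq_zero_of_forall_sum_sq_div_le {w a : ι → ℝ} {z : σ → ℝ}
    (ha : ∀ b ∈ V, ∑ i, a i * eval (x i) b = eval z b)
    (hamin : ∀ a' : ι → ℝ, (∀ b ∈ V, ∑ i, a' i * eval (x i) b = eval z b) →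
      ∑ i, a i ^ 2 / w i ≤ ∑ i, a' i ^ 2 / w i)
    {g : ι → ℝ} (hg : ∀ b ∈ V, ∑ i, g i * eval (x i) b = 0) :
    ∑ i, a i * g i / w i = 0 := by
  simp only [div_eq_mul_inv] at hamin ⊢
  refine sum_mul_mul_eq_zero_of_forall_sum_sq_mul_le (fun i => (w i)⁻¹) a g fun t => ?_
  refine hamin _ fun b hb => ?_
  simp only [add_mul, sum_add_distrib, mul_assoc, ← mul_sum, hg b hb, ha b hb]
  ring

end LeastSquares

theorem stmt_2_general {d m N : ℕ}
    (x : Fin N → Fin d → ℝ) (f w : Fin N → ℝ) (hw : ∀ i, 0 < w i)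
    (p : MvPolynomial (Fin d) ℝ) (hpm : p.totalDegree ≤ m)
    (hpmin : ∀ q : MvPolynomial (Fin d) ℝ, q.totalDegree ≤ m →
      ∑ i, (eval (x i) p - f i) ^ 2 * w i ≤ ∑ i, (eval (x i) q - f i) ^ 2 * w i)
    (a : Fin N → ℝ)
    (ha : ∀ b : MvPolynomial (Fin d) ℝ, b.totalDegree ≤ m →
      ∑ i, a i * eval (x i) b = eval 0 b)
    (hamin : ∀ a' : Fin N → ℝ,
      (∀ b : MvPolynomial (Fin d) ℝ, b.totalDegree ≤ m →
        ∑ i, a' i * eval (x i) b = eval 0 b) →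
      ∑ i, (a i) ^ 2 / w i ≤ ∑ i, (a' i) ^ 2 / w i) :
    eval 0 p = ∑ i, a i * f i := by
  simp only [← mem_restrictTotalDegree] at hpm hpmin ha hamin
  have hdual : ∑ i, a i * (eval (x i) p - f i) = 0 := by
    rw [← sum_mul_div_eq_zero_of_forall_sum_sq_div_le ha hamin
      fun b hb => sum_residual_mul_mul_eval_eq_zero hpm hpmin hb]
    exact sum_congr rfl fun i _ => by field_simp [(hw i).ne']
  calc eval 0 p = ∑ i, a i * eval (x i) p := (ha p hpm).symm
    _ = ∑ i, a i * f i + ∑ i, a i * (eval (x i) p - f i) := by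
      rw [← sum_add_distrib]
      exact sum_congr rfl fun i _ => by ring
    _ = ∑ i, a i * f i := by rw [hdual, add_zero]

/-- Backus–Gilbert duality for moving least-squares: the value at 0 of the weighted
least-squares polynomial equals `∑ aᵢ fᵢ` where the `aᵢ` solve the dual problem. -/
theorem stmt_2 {d m N J : ℕ}
    (x : Fin N → Fin d → ℝ) (f w : Fin N → ℝ) (hw : ∀ i, 0 < w i)
    (bb : Module.Basis (Fin J) ℝ (MvPolynomial.restrictTotalDegree (Fin d) ℝ m))
    (hcond : IsUnit
      ((Matrix.of fun i j => eval (x i) ((bb j : MvPolynomial (Fin d) ℝ)))ᵀ *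
        Matrix.diagonal w *
        Matrix.of fun i j => eval (x i) ((bb j : MvPolynomial (Fin d) ℝ))))
    (p : MvPolynomial (Fin d) ℝ) (hpm : p.totalDegree ≤ m)
    (hpmin : ∀ q : MvPolynomial (Fin d) ℝ, q.totalDegree ≤ m →
      ∑ i, (eval (x i) p - f i) ^ 2 * w i ≤ ∑ i, (eval (x i) q - f i) ^ 2 * w i)
    (a : Fin N → ℝ)
    (ha : ∀ b : MvPolynomial (Fin d) ℝ, b.totalDegree ≤ m →
      ∑ i, a i * eval (x i) b = eval 0 b)
    (hamin : ∀ a' : Fin N → ℝ,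
      (∀ b : MvPolynomial (Fin d) ℝ, b.totalDegree ≤ m →
        ∑ i, a' i * eval (x i) b = eval 0 b) →
      ∑ i, (a i) ^ 2 / w i ≤ ∑ i, (a' i) ^ 2 / w i) :
    eval 0 p = ∑ i, a i * f i :=
  stmt_2_general x f w hw p hpm hpmin a ha hamin
end

section
/- Let M ⊂ ℝ^n be a compact C² submanifold with reach τ > 0, and let x ∈ M. Then every point p ∈ M with ‖p − x‖ ≤ s satisfies d(p, x + T_x M) ≤ s²/(2τ), i.e., the distance from p to the affine tangent space at x is at most s²/(2τ). -/
/-!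
Let `ξ` be a nearest-point map of `M` and `d = infDist · M`. Below the reach, `d` grows at unit
speed along normal rays: if `0 < d y ≤ σ < τ`, the point `ξ y + (σ / d y) • (y - ξ y)` is at
distance `σ` from `M`. This is proved with an Euler scheme for the gradient flow of `d`, whose
polygons gain distance almost at unit speed because `ξ` is uniformly continuous on `{d ≤ σ}`;
equality in the triangle inequality then puts the limit point on the ray.

If `v` is a unit vector with `⟪v, u⟫ ≤ 0` on the tangent cone at `x ∈ M`, the nearest point of
`x + t • v` is `x + o(t)`, and letting `t → 0` in the previous statement shows that the open ball
of radius `σ < τ` about `x + σ • v` misses `M`, i.e. `2 σ ⟪v, q - x⟫ ≤ ‖q - x‖²` for `q ∈ M`.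
Taking for `v` the direction of the component of `p - x` orthogonal to `T` gives
`d(p, x + T) ≤ ‖p - x‖² / (2 τ)`.
-/

open Metric Filter Set
open scoped RealInnerProductSpace Topology

theorem sub_div_le_of_sq_sub_le {A a x : ℝ} (hA : 0 < A) (ha : 0 ≤ a) (hx : 0 ≤ x)
    (h : A ^ 2 - a ≤ x ^ 2) : A - a / A ≤ x := by
  have : A ^ 2 - a ≤ A * x := by
    rcases le_total x A with hxA | hAx <;> nlinarith
  rw [sub_le_iff_le_add, ← sub_le_iff_le_add', le_div_iff₀ hA]
  nlinarith

theorem mem_tangentConeAt_of_mapClusterPt {R E α : Type*} [AddCommGroup E] [SMul R E]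
    [TopologicalSpace E] [IsTopologicalAddGroup E] {s : Set E} {x c : E} {l : Filter α}
    {r : α → R} {g : α → E} (hgs : ∀ᶠ a in l, g a ∈ s) (hgx : Tendsto g l (𝓝 x))
    (hc : MapClusterPt c l fun a ↦ r a • (g a - x)) : c ∈ tangentConeAt R s x := by
  set l' := l ⊓ comap (fun a ↦ r a • (g a - x)) (𝓝 c)
  have : l'.NeBot := neBot_inf_comap_iff_map.2 (by rw [inf_comm]; exact hc.neBot)
  refine mem_tangentConeAt_of_seq l' r (fun a ↦ g a - x) ?_ ?_
    (tendsto_comap.mono_left inf_le_right)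
  · simpa using (hgx.sub_const x).mono_left inf_le_left
  · filter_upwards [hgs.filter_mono inf_le_left] with a ha
    simpa using ha

theorem eq_add_smul_of_dist_add_dist_eq {E : Type*} [NormedAddCommGroup E] [NormedSpace ℝ E]
    [StrictConvexSpace ℝ E] {a b c : E} (hab : dist a b ≠ 0)
    (h : dist a b + dist b c = dist a c) : c = a + (dist a c / dist a b) • (b - a) := by
  have hac : dist a c ≠ 0 := by
    intro h0
    exact hab (by linarith [dist_nonneg (x := a) (y := b), dist_nonneg (x := b) (y := c)])
  have hb : b = AffineMap.lineMap a c (dist a b / dist a c) := by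
    apply eq_lineMap_of_dist_eq_mul_of_dist_eq_mul
    · field_simp
    · field_simp; linarith
  have hba : b - a = (dist a b / dist a c) • (c - a) := by
    conv_lhs => rw [hb, AffineMap.lineMap_apply, vsub_eq_sub, vadd_eq_add, add_sub_cancel_right]
  rw [hba, smul_smul, div_mul_div_cancel₀ hab, div_self hac, one_smul, add_sub_cancel]

section NearestPoint
variable {E : Type*} [NormedAddCommGroup E]

/-- Encodes `reach M ≥ τ`: nearest points to `M` are unique within distance `τ`. -/
structure IsNearestPointMap (M : Set E) (τ : ℝ) (ξ : E → E) : Prop where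
  isCompact : IsCompact M
  mem : ∀ y, ξ y ∈ M
  dist_eq : ∀ y, dist y (ξ y) = infDist y M
  eq_of_dist_eq : ∀ ⦃y p⦄, infDist y M < τ → p ∈ M → dist y p = infDist y M → p = ξ y

theorem exists_isNearestPointMap {M : Set E} {τ : ℝ} (hM : IsCompact M) (hne : M.Nonempty)
    (hreach : ∀ y, infDist y M < τ → ∃! p, p ∈ M ∧ dist y p = infDist y M) :
    ∃ ξ, IsNearestPointMap M τ ξ := by
  choose ξ hξM hξd using fun y ↦ hM.exists_infDist_eq_dist hne y
  refine ⟨ξ, hM, hξM, fun y ↦ (hξd y).symm, fun y p hy hp hyp ↦ ?_⟩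
  exact (hreach y hy).unique ⟨hp, hyp⟩ ⟨hξM y, (hξd y).symm⟩

namespace IsNearestPointMap
variable {M : Set E} {τ : ℝ} {ξ : E → E}

theorem norm_sub_eq_infDist (hξ : IsNearestPointMap M τ ξ) (y : E) :
    ‖y - ξ y‖ = infDist y M := by
  rw [← dist_eq_norm, hξ.dist_eq]

theorem dist_le_two_mul_dist (hξ : IsNearestPointMap M τ ξ) {x : E} (hx : x ∈ M) (y : E) :
    dist (ξ y) x ≤ 2 * dist y x := by
  have := (hξ.dist_eq y).trans_le (infDist_le_dist_of_mem hx)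
  linarith [dist_triangle_left (ξ y) x y]

theorem eq_of_mapClusterPt (hξ : IsNearestPointMap M τ ξ) {y p : E} (hy : infDist y M < τ)
    (hp : MapClusterPt p (𝓝 y) ξ) : p = ξ y := by
  have hpM : p ∈ M :=
    hξ.isCompact.isClosed.mem_of_mapClusterPt hp (Eventually.of_forall hξ.mem)
  have hle : dist y p ≤ infDist y M := by
    refine le_of_forall_pos_le_add fun r hr ↦ ?_
    rw [dist_comm, ← mem_closedBall]
    refine isClosed_closedBall.mem_of_mapClusterPt hp ?_
    filter_upwards [ball_mem_nhds y (half_pos hr)] with a ha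
    rw [mem_ball] at ha
    rw [mem_closedBall]
    calc dist (ξ a) y ≤ dist a (ξ a) + dist a y := dist_triangle_left _ _ _
      _ = infDist a M + dist a y := by rw [hξ.dist_eq]
      _ ≤ infDist y M + dist a y + dist a y := by
        gcongr; exact infDist_le_infDist_add_dist
      _ ≤ infDist y M + r := by linarith
  exact hξ.eq_of_dist_eq hy hpM (le_antisymm hle (infDist_le_dist_of_mem hpM))

theorem continuousAt (hξ : IsNearestPointMap M τ ξ) {y : E} (hy : infDist y M < τ) :
    ContinuousAt ξ y :=
  hξ.isCompact.tendsto_nhds_of_unique_mapClusterPt (Eventually.of_forall hξ.mem)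
    fun _ _ hp ↦ hξ.eq_of_mapClusterPt hy hp

theorem uniformContinuousOn [ProperSpace E] (hξ : IsNearestPointMap M τ ξ) {b : ℝ}
    (hb : b < τ) : UniformContinuousOn ξ {y | infDist y M ≤ b} := by
  have hsub : {y | infDist y M ≤ b} ⊆ cthickening b M := fun y hy ↦
    mem_cthickening_of_dist_le y (ξ y) b M (hξ.mem y) ((hξ.dist_eq y).trans_le hy)
  refine IsCompact.uniformContinuousOn_of_continuous ?_
    fun y hy ↦ (hξ.continuousAt (lt_of_le_of_lt hy hb)).continuousWithinAt
  exact hξ.isCompact.cthickening.of_isClosed_subset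
    (isClosed_le (continuous_infDist_pt M) continuous_const) hsub

end IsNearestPointMap

variable [InnerProductSpace ℝ E]

/-- A step of length `s` of the Euler scheme for the gradient flow of `infDist · M`, whose
gradient at `y` is `(y - ξ y) / ‖y - ξ y‖`. -/
noncomputable def normalStep (ξ : E → E) (s : ℝ) (y : E) : E :=
  y + (s / ‖y - ξ y‖) • (y - ξ y)

variable {ξ : E → E} {s : ℝ}

theorem dist_normalStep_le (hs : 0 ≤ s) (y : E) : dist (normalStep ξ s y) y ≤ s := by
  rw [normalStep, dist_eq_norm, add_sub_cancel_left, norm_smul, Real.norm_eq_abs,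
    abs_div, abs_norm, abs_of_nonneg hs]
  rcases eq_or_ne ‖y - ξ y‖ 0 with h | h
  · simp [h, hs]
  · rw [div_mul_cancel₀ _ h]

theorem inner_sub_normalStep (y : E) :
    ⟪y - ξ y, normalStep ξ s y - y⟫ = s * ‖y - ξ y‖ := by
  rw [normalStep, add_sub_cancel_left, real_inner_smul_right, real_inner_self_eq_norm_sq]
  rcases eq_or_ne ‖y - ξ y‖ 0 with h | h
  · simp [h]
  · field_simp

theorem dist_iterate_normalStep_le (hs : 0 ≤ s) (y : E) (k : ℕ) :
    dist ((normalStep ξ s)^[k] y) y ≤ k * s := by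
  induction k with
  | zero => simp
  | succ k ih =>
    rw [Function.iterate_succ_apply', Nat.cast_succ, add_one_mul]
    exact (dist_triangle _ _ _).trans (add_le_add (dist_normalStep_le hs _) ih) |>.trans_eq
      (add_comm _ _)

namespace IsNearestPointMap
variable {M : Set E} {τ : ℝ}

theorem sq_infDist_add_inner_le (hξ : IsNearestPointMap M τ ξ) (y z : E) :
    infDist y M ^ 2 + 2 * ⟪y - ξ y, z - y⟫ - 2 * dist (ξ z) (ξ y) * dist z y ≤
      infDist z M ^ 2 := by
  have hy : infDist y M ≤ ‖y - ξ z‖ := by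
    rw [← dist_eq_norm]; exact infDist_le_dist_of_mem (hξ.mem z)
  have hz : ‖z - ξ z‖ ^ 2 = ‖y - ξ z‖ ^ 2 + 2 * ⟪y - ξ z, z - y⟫ + ‖z - y‖ ^ 2 := by
    rw [← norm_add_sq_real, sub_add_sub_cancel']
  have hinner : ⟪y - ξ z, z - y⟫ = ⟪y - ξ y, z - y⟫ + ⟪ξ y - ξ z, z - y⟫ := by
    rw [← inner_add_left, sub_add_sub_cancel]
  have hcs : -(dist (ξ z) (ξ y) * dist z y) ≤ ⟪ξ y - ξ z, z - y⟫ := by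
    rw [dist_eq_norm', dist_eq_norm]
    exact neg_le_of_abs_le (abs_real_inner_le_norm _ _)
  rw [← hξ.norm_sub_eq_infDist z]
  nlinarith [pow_le_pow_left₀ infDist_nonneg hy 2, sq_nonneg ‖z - y‖]

theorem le_infDist_normalStep (hξ : IsNearestPointMap M τ ξ) {δ ε : ℝ} {y : E} (hδ : 0 < δ)
    (hδy : δ ≤ infDist y M) (hs : 0 ≤ s) (hε : dist (ξ (normalStep ξ s y)) (ξ y) ≤ ε) :
    infDist y M + s - (s ^ 2 + 2 * ε * s) / δ ≤ infDist (normalStep ξ s y) M := by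
  have hε0 : 0 ≤ ε := dist_nonneg.trans hε
  have hA : δ ≤ infDist y M + s := by linarith
  have hsq := hξ.sq_infDist_add_inner_le y (normalStep ξ s y)
  rw [inner_sub_normalStep, hξ.norm_sub_eq_infDist] at hsq
  have herr : dist (ξ (normalStep ξ s y)) (ξ y) * dist (normalStep ξ s y) y ≤ ε * s :=
    mul_le_mul hε (dist_normalStep_le hs y) dist_nonneg hε0
  have hmain := sub_div_le_of_sq_sub_le (a := s ^ 2 + 2 * ε * s)
    (x := infDist (normalStep ξ s y) M) (hδ.trans_le hA) (by positivity) infDist_nonneg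
    (by nlinarith)
  have := div_le_div_of_nonneg_left (by positivity : 0 ≤ s ^ 2 + 2 * ε * s) hδ hA
  linarith

theorem le_infDist_iterate_normalStep (hξ : IsNearestPointMap M τ ξ) {ε : ℝ} {y : E} {m : ℕ}
    (h0 : 0 < infDist y M) (hs : 0 ≤ s) (hsε : s + 2 * ε ≤ infDist y M)
    (hε : ∀ k < m, dist (ξ ((normalStep ξ s)^[k + 1] y)) (ξ ((normalStep ξ s)^[k] y)) ≤ ε) :
    ∀ k ≤ m, infDist y M + k * (s - (s ^ 2 + 2 * ε * s) / infDist y M) ≤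
      infDist ((normalStep ξ s)^[k] y) M := by
  have hloss : (s ^ 2 + 2 * ε * s) / infDist y M ≤ s := by
    rw [div_le_iff₀ h0]; nlinarith
  intro k hk
  induction k with
  | zero => simp
  | succ k ih =>
    have ih := ih (by omega)
    have hstep := hξ.le_infDist_normalStep h0 (by nlinarith [k.cast_nonneg (α := ℝ)]) hs
      (by simpa only [Function.iterate_succ_apply'] using hε k hk)
    rw [Function.iterate_succ_apply']
    push_cast
    linarith

theorem exists_dist_le_sub_le_infDist (hξ : IsNearestPointMap M τ ξ) {y : E} {σ ε : ℝ}
    (h0 : 0 < infDist y M) (hσ : infDist y M ≤ σ) (hε : 0 < ε) (hεy : 3 * ε ≤ infDist y M)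
    (hUC : UniformContinuousOn ξ {z | infDist z M ≤ σ}) :
    ∃ z, dist z y ≤ σ - infDist y M ∧
      σ - 3 * ε * (σ - infDist y M) / infDist y M ≤ infDist z M := by
  obtain ⟨η, hη, hξη⟩ := Metric.uniformContinuousOn_iff_le.1 hUC ε hε
  set d := infDist y M with hd
  set L := σ - d
  have hL : 0 ≤ L := sub_nonneg.2 hσ
  -- `m` Euler steps of length `L / m ≤ η`, so that `ξ` moves by at most `ε` along each step
  obtain ⟨m, hm⟩ := exists_nat_gt (L / min η ε)
  have hm0 : (0 : ℝ) < m := (div_nonneg hL (le_min hη.le hε.le)).trans_lt hm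
  set s := L / m
  have hs : 0 ≤ s := div_nonneg hL hm0.le
  have hms : m * s = L := mul_div_cancel₀ L hm0.ne'
  have hsmin : s ≤ min η ε := by
    rw [div_lt_iff₀ (lt_min hη hε), mul_comm] at hm
    rw [div_le_iff₀ hm0]; exact hm.le
  have hY : ∀ k ≤ m, infDist ((normalStep ξ s)^[k] y) M ≤ σ := fun k hk ↦ by
    have h1 := infDist_le_infDist_add_dist (x := (normalStep ξ s)^[k] y) (y := y) (s := M)
    have h2 := dist_iterate_normalStep_le (ξ := ξ) hs y k
    have h3 : (k : ℝ) * s ≤ m * s := by gcongr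
    linarith
  have hlow := hξ.le_infDist_iterate_normalStep h0 hs (ε := ε) (m := m)
    (by linarith [min_le_right η ε])
    (fun k hk ↦ hξη _ (hY (k + 1) hk) _ (hY k hk.le) <| by
      rw [Function.iterate_succ_apply']
      exact (dist_normalStep_le hs _).trans (hsmin.trans (min_le_left _ _))) m le_rfl
  rw [← hd] at hlow
  refine ⟨_, (dist_iterate_normalStep_le hs y m).trans hms.le, le_trans ?_ hlow⟩
  have : (m : ℝ) * ((s ^ 2 + 2 * ε * s) / d) ≤ 3 * ε * L / d := by
    rw [mul_div_assoc', div_le_div_iff_of_pos_right h0, ← hms]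
    have := hsmin.trans (min_le_right η ε)
    nlinarith
  have : (m : ℝ) * (s - (s ^ 2 + 2 * ε * s) / d) = L - m * ((s ^ 2 + 2 * ε * s) / d) := by
    rw [mul_sub, hms]
  linarith

variable [ProperSpace E]

theorem exists_dist_le_le_infDist (hξ : IsNearestPointMap M τ ξ) {y : E} {σ : ℝ}
    (h0 : 0 < infDist y M) (hσ : infDist y M ≤ σ) (hστ : σ < τ) :
    ∃ z, dist z y ≤ σ - infDist y M ∧ σ ≤ infDist z M := by
  obtain ⟨z, hz, hmax⟩ := (isCompact_closedBall y (σ - infDist y M)).exists_isMaxOn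
    (nonempty_closedBall.2 (sub_nonneg.2 hσ)) (continuous_infDist_pt M).continuousOn
  refine ⟨z, hz, le_of_tendsto (x := 𝓝[>] 0)
    (f := fun ε ↦ σ - 3 * ε * (σ - infDist y M) / infDist y M) ?_ ?_⟩
  · refine tendsto_nhdsWithin_of_tendsto_nhds ?_
    have hc : Continuous fun ε : ℝ ↦ σ - 3 * ε * (σ - infDist y M) / infDist y M := by fun_prop
    simpa using hc.tendsto 0
  · filter_upwards [Ioo_mem_nhdsGT (by positivity : 0 < infDist y M / 3)] with ε hε
    obtain ⟨w, hw, hlow⟩ := hξ.exists_dist_le_sub_le_infDist h0 hσ hε.1 (by linarith [hε.2])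
      (hξ.uniformContinuousOn hστ)
    exact hlow.trans (isMaxOn_iff.1 hmax w (mem_closedBall.2 hw))

theorem infDist_add_smul_sub (hξ : IsNearestPointMap M τ ξ) {y : E} {σ : ℝ}
    (h0 : 0 < infDist y M) (hσ : infDist y M ≤ σ) (hστ : σ < τ) :
    infDist (ξ y + (σ / infDist y M) • (y - ξ y)) M = σ := by
  obtain ⟨z, hzy, hz⟩ := hξ.exists_dist_le_le_infDist h0 hσ hστ
  have hyξ : dist (ξ y) y = infDist y M := by rw [dist_comm, hξ.dist_eq]
  have hzξ : infDist z M ≤ dist (ξ y) z := by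
    rw [dist_comm]; exact infDist_le_dist_of_mem (hξ.mem y)
  -- equality in the triangle inequality puts `z` on the ray from `ξ y` through `y`
  have htri := dist_triangle (ξ y) y z
  rw [dist_comm y z] at htri
  have hsum : dist (ξ y) z = σ := by linarith
  have hz_eq := eq_add_smul_of_dist_add_dist_eq (c := z) (hyξ ▸ h0.ne')
    (by rw [dist_comm y z]; linarith)
  rw [hsum, hyξ] at hz_eq
  rw [← hz_eq]
  linarith

theorem tendsto_inv_smul_sub (hξ : IsNearestPointMap M τ ξ) {x v : E} (hx : x ∈ M)
    (hv : ∀ u ∈ tangentConeAt ℝ M x, ⟪v, u⟫ ≤ 0) :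
    Tendsto (fun t : ℝ ↦ t⁻¹ • (ξ (x + t • v) - x)) (𝓝[>] 0) (𝓝 0) := by
  set f := fun t : ℝ ↦ t⁻¹ • (ξ (x + t • v) - x)
  have hf : ∀ t > 0, ‖f t‖ ^ 2 ≤ 2 * ⟪v, f t⟫ := fun t ht ↦ by
    have hnear := (hξ.dist_eq (x + t • v)).trans_le (infDist_le_dist_of_mem hx)
    have hsub : x + t • v - ξ (x + t • v) = t • (v - f t) := by
      simp only [f, smul_sub, smul_inv_smul₀ ht.ne']; abel
    rw [dist_eq_norm, dist_eq_norm, hsub, add_sub_cancel_left, norm_smul, norm_smul,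
      Real.norm_of_nonneg ht.le] at hnear
    have := pow_le_pow_left₀ (norm_nonneg _) (le_of_mul_le_mul_left hnear ht) 2
    rw [norm_sub_sq_real] at this
    linarith
  have hbound : ∀ t > 0, f t ∈ closedBall 0 (2 * ‖v‖) := fun t ht ↦ by
    rw [mem_closedBall_zero_iff]
    have := hf t ht
    nlinarith [real_inner_le_norm v (f t), norm_nonneg (f t), norm_nonneg v]
  refine (isCompact_closedBall 0 (2 * ‖v‖)).tendsto_nhds_of_unique_mapClusterPt
    (eventually_mem_nhdsWithin.mono hbound) fun c _ hc ↦ ?_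
  have hclose : Tendsto (fun t : ℝ ↦ ξ (x + t • v)) (𝓝[>] 0) (𝓝 x) := by
    rw [tendsto_iff_dist_tendsto_zero]
    refine squeeze_zero (fun _ ↦ dist_nonneg) (fun t ↦ hξ.dist_le_two_mul_dist hx _) ?_
    have hc : Continuous fun t : ℝ ↦ 2 * dist (x + t • v) x := by fun_prop
    simpa using (hc.tendsto 0).mono_left nhdsWithin_le_nhds
  have hcT : c ∈ tangentConeAt ℝ M x := mem_tangentConeAt_of_mapClusterPt
    (Eventually.of_forall fun t ↦ hξ.mem _) hclose hc
  have hcS : ‖c‖ ^ 2 ≤ 2 * ⟪v, c⟫ :=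
    (isClosed_le (by fun_prop) (by fun_prop)).mem_of_mapClusterPt
      (s := {u : E | ‖u‖ ^ 2 ≤ 2 * ⟪v, u⟫}) hc (eventually_mem_nhdsWithin.mono hf)
  have := hv c hcT
  rw [← norm_eq_zero]
  nlinarith [norm_nonneg c]

theorem infDist_add_smul_eq (hξ : IsNearestPointMap M τ ξ) {x v : E} (hx : x ∈ M)
    (hv1 : ‖v‖ = 1) (hv : ∀ u ∈ tangentConeAt ℝ M x, ⟪v, u⟫ ≤ 0) {σ : ℝ} (hσ : 0 < σ)
    (hστ : σ < τ) : infDist (x + σ • v) M = σ := by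
  -- the points at distance `σ` on the normal rays through `ξ (x + t • v)` tend to `x + σ • v`
  set f := fun t : ℝ ↦ t⁻¹ • (ξ (x + t • v) - x)
  have hf := hξ.tendsto_inv_smul_sub hx hv
  have hq : ∀ t ≠ 0, ξ (x + t • v) = x + t • f t := fun t ht ↦ by
    simp only [f, smul_inv_smul₀ ht, add_sub_cancel]
  have hvf : Tendsto (fun t ↦ v - f t) (𝓝[>] 0) (𝓝 v) := by
    simpa using tendsto_const_nhds.sub hf
  have hnorm : Tendsto (fun t ↦ ‖v - f t‖) (𝓝[>] 0) (𝓝 1) := hv1 ▸ hvf.norm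
  have hz : Tendsto (fun t ↦ x + t • f t + (σ / ‖v - f t‖) • (v - f t)) (𝓝[>] 0)
      (𝓝 (x + σ • v)) := by
    have ht : Tendsto (fun t : ℝ ↦ t) (𝓝[>] 0) (𝓝 0) := nhdsWithin_le_nhds
    simpa using (tendsto_const_nhds.add (ht.smul hf)).add
      ((tendsto_const_nhds.div hnorm one_ne_zero).smul hvf)
  refine tendsto_nhds_unique (((continuous_infDist_pt M).tendsto _).comp hz)
    (tendsto_const_nhds.congr' ?_)
  filter_upwards [Ioo_mem_nhdsGT hσ, hnorm.eventually (lt_mem_nhds one_pos)]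
    with t ⟨ht, htσ⟩ hpos
  have hsub : x + t • v - ξ (x + t • v) = t • (v - f t) := by
    rw [hq t ht.ne', smul_sub]; abel
  have hd : infDist (x + t • v) M = t * ‖v - f t‖ := by
    rw [← hξ.norm_sub_eq_infDist, hsub, norm_smul, Real.norm_of_nonneg ht.le]
  have hdσ : infDist (x + t • v) M ≤ σ := by
    have := infDist_le_dist_of_mem (x := x + t • v) hx
    rw [dist_eq_norm, add_sub_cancel_left, norm_smul, hv1, mul_one, Real.norm_of_nonneg ht.le]
      at this
    linarith
  have := hξ.infDist_add_smul_sub (hd ▸ mul_pos ht hpos) hdσ hστ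
  rw [hsub, hd, smul_smul, hq t ht.ne',
    show σ / (t * ‖v - f t‖) * t = σ / ‖v - f t‖ by field_simp] at this
  exact this.symm

theorem two_mul_inner_le (hξ : IsNearestPointMap M τ ξ) (hτ : 0 < τ) {x v q : E} (hx : x ∈ M)
    (hv : ∀ u ∈ tangentConeAt ℝ M x, ⟪v, u⟫ ≤ 0) (hq : q ∈ M) :
    2 * τ * ⟪v, q - x⟫ ≤ ‖v‖ * ‖q - x‖ ^ 2 := by
  rcases eq_or_ne v 0 with rfl | hv0
  · simp
  set u := ‖v‖⁻¹ • v
  have hv0' : 0 < ‖v‖ := norm_pos_iff.2 hv0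
  have hu1 : ‖u‖ = 1 := norm_smul_inv_norm hv0
  have hu : ∀ w ∈ tangentConeAt ℝ M x, ⟪u, w⟫ ≤ 0 := fun w hw ↦ by
    rw [real_inner_smul_left]
    exact mul_nonpos_of_nonneg_of_nonpos (inv_nonneg.2 hv0'.le) (hv w hw)
  have hσ : ∀ σ ∈ Ioo 0 τ, 2 * σ * ⟪u, q - x⟫ ≤ ‖q - x‖ ^ 2 := fun σ hσ ↦ by
    have h1 := (hξ.infDist_add_smul_eq hx hu1 hu hσ.1 hσ.2).symm.trans_le
      (infDist_le_dist_of_mem (x := x + σ • u) hq)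
    rw [dist_eq_norm, show x + σ • u - q = σ • u - (q - x) by abel] at h1
    have h2 := pow_le_pow_left₀ hσ.1.le h1 2
    rw [norm_sub_sq_real, norm_smul, real_inner_smul_left, hu1, Real.norm_of_nonneg hσ.1.le]
      at h2
    linarith
  have hlim : 2 * τ * ⟪u, q - x⟫ ≤ ‖q - x‖ ^ 2 := by
    have hc : Continuous fun σ : ℝ ↦ 2 * σ * ⟪u, q - x⟫ := by fun_prop
    exact le_of_tendsto ((hc.tendsto τ).mono_left nhdsWithin_le_nhds)
      (Filter.mem_of_superset (Ioo_mem_nhdsLT hτ) hσ)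
  have : 2 * τ * ⟪v, q - x⟫ = ‖v‖ * (2 * τ * ⟪u, q - x⟫) := by
    rw [real_inner_smul_left]; field_simp
  rw [this]
  exact mul_le_mul_of_nonneg_left hlim hv0'.le

end IsNearestPointMap
end NearestPoint

theorem stmt_11_general {n : ℕ} (M : Set (EuclideanSpace ℝ (Fin n))) (hM : IsCompact M)
    (τ : ℝ) (hτ : 0 < τ)
    (hreach : ∀ y : EuclideanSpace ℝ (Fin n), Metric.infDist y M < τ →
      ∃! p, p ∈ M ∧ dist y p = Metric.infDist y M)
    (x : EuclideanSpace ℝ (Fin n)) (hx : x ∈ M)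
    (T : Submodule ℝ (EuclideanSpace ℝ (Fin n)))
    (hT : tangentConeAt ℝ M x = (T : Set (EuclideanSpace ℝ (Fin n))))
    (s : ℝ) :
    ∀ p ∈ M, dist p x ≤ s →
      Metric.infDist p ((fun v => x + v) '' (T : Set (EuclideanSpace ℝ (Fin n)))) ≤
        s ^ 2 / (2 * τ) := by
  intro p hp hps
  obtain ⟨ξ, hξ⟩ := exists_isNearestPointMap hM ⟨x, hx⟩ hreach
  set w := p - x - T.starProjection (p - x)
  have hwT : w ∈ Tᗮ := T.sub_starProjection_mem_orthogonal (p - x)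
  have hdist : infDist p ((fun v ↦ x + v) '' T) ≤ ‖w‖ := by
    refine (infDist_le_dist_of_mem (mem_image_of_mem (fun v ↦ x + v)
      (T.starProjection_apply_mem (p - x)))).trans_eq ?_
    rw [dist_eq_norm, sub_add_eq_sub_sub]
  have hnormal : ∀ u ∈ tangentConeAt ℝ M x, ⟪w, u⟫ = 0 := fun u hu ↦
    (Submodule.mem_orthogonal' T w).1 hwT u (hT.le hu)
  have hinner : ⟪w, p - x⟫ = ‖w‖ ^ 2 := by
    rw [← add_sub_cancel (T.starProjection (p - x)) (p - x), inner_add_right,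
      hnormal _ (hT ▸ T.starProjection_apply_mem _), zero_add, real_inner_self_eq_norm_sq]
  have key := hξ.two_mul_inner_le hτ hx (fun u hu ↦ (hnormal u hu).le) hp
  rw [hinner] at key
  have hpx : ‖p - x‖ ^ 2 ≤ s ^ 2 := by
    rw [← dist_eq_norm]; exact pow_le_pow_left₀ dist_nonneg hps 2
  refine hdist.trans ?_
  rw [le_div_iff₀ (by positivity)]
  rcases (norm_nonneg w).eq_or_lt with hw | hw
  · rw [← hw, zero_mul]; positivity
  · have := le_of_mul_le_mul_left (by linarith : ‖w‖ * (2 * τ * ‖w‖) ≤ ‖w‖ * ‖p - x‖ ^ 2) hw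
    linarith

/-- Tangent-plane approximation controlled by the reach: for a compact C²
submanifold `M` with reach `τ > 0`, any `p ∈ M` with `‖p − x‖ ≤ s` satisfies
`d(p, x + T_x M) ≤ s²/(2τ)`. The tangent space `T` at `x` is characterized as
the tangent cone of `M` at `x`, a linear subspace for a C² submanifold. -/
theorem stmt_11 {n : ℕ} (M : Set (EuclideanSpace ℝ (Fin n))) (hM : IsCompact M)
    (τ : ℝ) (hτ : 0 < τ)
    (hreach : ∀ y : EuclideanSpace ℝ (Fin n), Metric.infDist y M < τ →
      ∃! p, p ∈ M ∧ dist y p = Metric.infDist y M)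
    (x : EuclideanSpace ℝ (Fin n)) (hx : x ∈ M)
    (T : Submodule ℝ (EuclideanSpace ℝ (Fin n)))
    (hT : tangentConeAt ℝ M x = (T : Set (EuclideanSpace ℝ (Fin n))))
    (s : ℝ) (hs : 0 ≤ s) :
    ∀ p ∈ M, dist p x ≤ s →
      Metric.infDist p ((fun v => x + v) '' (T : Set (EuclideanSpace ℝ (Fin n)))) ≤
        s ^ 2 / (2 * τ) :=
  stmt_11_general M hM τ hτ hreach x hx T hT s
end

section
/- With notation as in the Backus–Gilbert formulation, if the weight wᵢ₀ at one sample point xᵢ₀ tends to infinity while all other weights stay fixed and the least-squares matrix remains invertible in the limit in the appropriate sense, then the weighted least-squares minimizer p* satisfies p*(xᵢ₀) → fᵢ₀; in particular, if the MLS weight function θ satisfies lim_{t→0} θ(t) = ∞, the MLS approximant interpolates the data: lim_{x → xᵢ} p_x(x) = f(xᵢ). -/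
open MvPolynomial Matrix Finset Filter Topology

/-! Comparing `p y` with the constant polynomial `f i₀` bounds every weighted residual
`(p y (x i) - f i)² θ(‖y - x i‖)` by `∑ i ≠ i₀, (f i₀ - f i)² θ(‖y - x i‖)`, which stays bounded
as `y → x i₀`. As `θ(‖y - x i₀‖) → ∞`, this forces `p y (x i₀) → f i₀`; as the other weights stay
bounded below, all sample values of `p y` stay bounded. Invertibility of the weighted Gram matrix
makes sampling injective on `Π_m`, so the coefficients of `p y` stay bounded too, and continuity of
the basis polynomials gives `p y (y) - p y (x i₀) → 0`. -/

open Asymptotics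

theorem Matrix.mulVec_injective_of_isUnit_mul {n k K : Type*} [Fintype n] [Fintype k]
    [DecidableEq k] [Field K] {A : Matrix k n K} {B : Matrix n k K} (h : IsUnit (A * B)) :
    Function.Injective B.mulVec := by
  refine Function.Injective.of_comp (f := A.mulVec) ?_
  simpa only [Function.comp_def, mulVec_mulVec] using mulVec_injective_iff_isUnit.2 h

theorem Matrix.isBigO_of_isBigO_mulVec {α ι κ F : Type*} [Fintype ι] [Fintype κ] [Norm F]
    {l : Filter α} {A : Matrix ι κ ℝ} (hA : Function.Injective A.mulVec) {c : α → κ → ℝ}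
    {g : α → F} (hc : (fun a => A *ᵥ c a) =O[l] g) : c =O[l] g := by
  obtain ⟨Ψ, hΨ⟩ := A.mulVecLin.exists_leftInverse_of_injective
    (LinearMap.ker_eq_bot.2 hA)
  have hc_eq : c = fun a => Ψ (A *ᵥ c a) := funext fun a => (LinearMap.congr_fun hΨ (c a)).symm
  rw [hc_eq]
  exact (LinearMap.toContinuousLinearMap Ψ).isBigO_comp _ l |>.trans hc

theorem tendsto_dotProduct_zero_of_isBigO {α κ : Type*} [Fintype κ] {l : Filter α}
    {u c : α → κ → ℝ} (hu : Tendsto u l (𝓝 0)) (hc : c =O[l] (fun _ => (1 : ℝ))) :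
    Tendsto (fun a => u a ⬝ᵥ c a) l (𝓝 0) := by
  rw [← isLittleO_one_iff ℝ] at hu ⊢
  rw [isLittleO_pi] at hu
  rw [isBigO_pi] at hc
  simpa only [dotProduct, mul_one] using
    IsLittleO.fun_sum fun j _ => (hu j).mul_isBigO (hc j)

theorem tendsto_of_sq_sub_mul_le {α : Type*} {l : Filter α} {a w : α → ℝ} {b B : ℝ}
    (hw : Tendsto w l atTop) (h : ∀ᶠ y in l, (a y - b) ^ 2 * w y ≤ B) :
    Tendsto a l (𝓝 b) := by
  have hsqrt : Tendsto (fun y => √(B / w y)) l (𝓝 0) := by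
    simpa using (tendsto_const_nhds.div_atTop hw).sqrt
  refine tendsto_sub_nhds_zero_iff.1 (squeeze_zero_norm' ?_ hsqrt)
  filter_upwards [h, hw.eventually_gt_atTop 0] with y hy hpos
  exact Real.abs_le_sqrt ((le_div_iff₀ hpos).2 hy)

theorem isBigO_one_of_sq_sub_mul_le {α : Type*} {l : Filter α} {a w : α → ℝ} {b B t : ℝ}
    (ht : 0 < t) (hw : ∀ᶠ y in l, t ≤ w y) (h : ∀ᶠ y in l, (a y - b) ^ 2 * w y ≤ B) :
    a =O[l] (fun _ => (1 : ℝ)) := by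
  refine IsBigO.of_bound (|b| + √(B / t)) ?_
  filter_upwards [h, hw] with y hy hty
  have hsq : (a y - b) ^ 2 ≤ B / t :=
    (le_div_iff₀ ht).2 ((mul_le_mul_of_nonneg_left hty (sq_nonneg _)).trans hy)
  have habs := Real.abs_le_sqrt hsq
  rw [norm_one, mul_one, Real.norm_eq_abs]
  calc |a y| = |b + (a y - b)| := by ring_nf
    _ ≤ |b| + |a y - b| := abs_add_le _ _
    _ ≤ |b| + √(B / t) := by gcongr

theorem tendsto_and_isBigO_of_weighted_sq_le {α ι : Type*} [Fintype ι] {l : Filter α}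
    {w : α → ι → ℝ} {W : ι → ℝ} {v : α → ι → ℝ} {f : ι → ℝ} {i₀ : ι}
    (hw₀ : Tendsto (fun a => w a i₀) l atTop)
    (hw : ∀ i ≠ i₀, Tendsto (fun a => w a i) l (𝓝 (W i))) (hW : ∀ i ≠ i₀, 0 < W i)
    (hmin : ∀ᶠ a in l, ∑ i, (v a i - f i) ^ 2 * w a i ≤ ∑ i, (f i₀ - f i) ^ 2 * w a i) :
    Tendsto (fun a => v a i₀) l (𝓝 (f i₀)) ∧ v =O[l] (fun _ => (1 : ℝ)) := by
  have hlower : ∀ i, ∃ t > 0, ∀ᶠ a in l, t ≤ w a i := by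
    intro i
    by_cases hi : i = i₀
    · subst hi
      exact ⟨1, one_pos, hw₀.eventually_ge_atTop 1⟩
    · exact ⟨W i / 2, half_pos (hW i hi),
        ((hw i hi).eventually_const_lt (half_lt_self (hW i hi))).mono fun _ => le_of_lt⟩
  choose t ht hwt using hlower
  have hrhs : Tendsto (fun a => ∑ i, (f i₀ - f i) ^ 2 * w a i) l
      (𝓝 (∑ i, (f i₀ - f i) ^ 2 * W i)) := by
    refine tendsto_finsetSum _ fun i _ => ?_
    by_cases hi : i = i₀
    · simpa [hi] using tendsto_const_nhds
    · exact (hw i hi).const_mul _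
  obtain ⟨B, hB⟩ := hrhs.isBoundedUnder_le.eventually_le
  have hterm : ∀ i, ∀ᶠ a in l, (v a i - f i) ^ 2 * w a i ≤ B := by
    intro i
    filter_upwards [hmin, hB, eventually_all.2 hwt] with a hmin_a hB_a hwt_a
    have hnonneg : ∀ k ∈ univ, 0 ≤ (v a k - f k) ^ 2 * w a k :=
      fun k _ => mul_nonneg (sq_nonneg _) ((ht k).le.trans (hwt_a k))
    exact (single_le_sum hnonneg (mem_univ i)).trans (hmin_a.trans hB_a)
  exact ⟨tendsto_of_sq_sub_mul_le hw₀ (hterm i₀),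
    isBigO_pi.2 fun i => isBigO_one_of_sq_sub_mul_le (ht i) (hwt i) (hterm i)⟩

theorem MvPolynomial.eval_eq_dotProduct_repr {σ ι R : Type*} [CommRing R] [Fintype ι]
    {V : Submodule R (MvPolynomial σ R)} (b : Module.Basis ι R V) (q : V) (z : σ → R) :
    eval z (q : MvPolynomial σ R) = (fun j => eval z (b j : MvPolynomial σ R)) ⬝ᵥ b.repr q := by
  conv_lhs => rw [← b.sum_repr q]
  simp only [Submodule.coe_sum, Submodule.coe_smul, map_sum, smul_eval, dotProduct]
  exact sum_congr rfl fun j _ => mul_comm _ _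

theorem tendsto_dist_nhdsWithin_nhdsGT {X : Type*} [MetricSpace X] {x : X} {s : Set X}
    (hs : x ∉ s) : Tendsto (fun y => dist y x) (𝓝[s] x) (𝓝[>] 0) := by
  refine tendsto_nhdsWithin_iff.2 ⟨?_, ?_⟩
  · simpa using
      ((continuous_id.dist (continuous_const (y := x))).tendsto x).mono_left nhdsWithin_le_nhds
  · exact eventually_mem_nhdsWithin.mono fun y hy => dist_pos.2 (ne_of_mem_of_not_mem hy hs)

theorem MvPolynomial.tendsto_eval_sub_eval_of_isBigO {σ ι κ : Type*} [Fintype ι] [Fintype κ]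
    {V : Submodule ℝ (MvPolynomial σ ℝ)} (b : Module.Basis κ ℝ V) {x : ι → σ → ℝ}
    (hx : Function.Injective (of fun i j => eval (x i) (b j : MvPolynomial σ ℝ)).mulVec)
    {z₀ : σ → ℝ} {l : Filter (σ → ℝ)} (hl : l ≤ 𝓝 z₀) {q : (σ → ℝ) → MvPolynomial σ ℝ}
    (hqV : ∀ᶠ z in l, q z ∈ V) (hq : (fun z i => eval (x i) (q z)) =O[l] (fun _ => (1 : ℝ))) :
    Tendsto (fun z => eval z (q z) - eval z₀ (q z)) l (𝓝 0) := by
  set Φ : (σ → ℝ) → κ → ℝ := fun z j => eval z (b j : MvPolynomial σ ℝ)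
  have hcoeff : ∀ z, q z ∈ V → ∃ c : κ → ℝ, ∀ y, eval y (q z) = Φ y ⬝ᵥ c :=
    fun z hz => ⟨_, eval_eq_dotProduct_repr b ⟨q z, hz⟩⟩
  choose! c hc using hcoeff
  have hcO : c =O[l] (fun _ => (1 : ℝ)) := by
    refine isBigO_of_isBigO_mulVec hx (hq.congr' ?_ .rfl)
    filter_upwards [hqV] with z hz
    ext i
    rw [hc z hz (x i)]
    rfl
  have hΦ : Tendsto (fun z => Φ z - Φ z₀) l (𝓝 0) := by
    have hΦc : Continuous Φ := continuous_pi fun j => MvPolynomial.continuous_eval _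
    simpa using ((hΦc.tendsto z₀).sub_const (Φ z₀)).mono_left hl
  refine (tendsto_dotProduct_zero_of_isBigO hΦ hcO).congr' ?_
  filter_upwards [hqV] with z hz
  rw [hc z hz z, hc z hz z₀, sub_dotProduct]

/-- Interpolation property of MLS: if the weight function `θ` blows up at 0
(and the local least-squares problems are well conditioned), then the MLS
approximant interpolates the data: `p_y(y) → f(xᵢ₀)` as `y → xᵢ₀`. -/
theorem stmt_16 {d m N J : ℕ}
    (θ : ℝ → ℝ) (hθcont : ContinuousOn θ (Set.Ioi 0)) (hθpos : ∀ t > 0, 0 < θ t)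
    (hθtop : Filter.Tendsto θ (nhdsWithin 0 (Set.Ioi 0)) Filter.atTop)
    (x : Fin N → Fin d → ℝ) (hxdist : Function.Injective x) (f : Fin N → ℝ)
    (bb : Module.Basis (Fin J) ℝ (MvPolynomial.restrictTotalDegree (Fin d) ℝ m))
    (S : Set (Fin d → ℝ)) (hS : S = {y | ∀ i, y ≠ x i})
    (p : (Fin d → ℝ) → MvPolynomial (Fin d) ℝ)
    (hdeg : ∀ y ∈ S, (p y).totalDegree ≤ m)
    (hmin : ∀ y ∈ S, ∀ q : MvPolynomial (Fin d) ℝ, q.totalDegree ≤ m →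
      ∑ i, (eval (x i) (p y) - f i) ^ 2 * θ (dist y (x i)) ≤
        ∑ i, (eval (x i) q - f i) ^ 2 * θ (dist y (x i)))
    (hcond : ∀ y ∈ S, IsUnit
      ((Matrix.of fun i j => eval (x i) ((bb j : MvPolynomial (Fin d) ℝ)))ᵀ *
        Matrix.diagonal (fun i => θ (dist y (x i))) *
        Matrix.of fun i j => eval (x i) ((bb j : MvPolynomial (Fin d) ℝ))))
    (i₀ : Fin N) :
    Filter.Tendsto (fun y => eval y (p y)) (nhdsWithin (x i₀) S) (nhds (f i₀)) := by
  rcases (𝓝[S] (x i₀)).eq_or_neBot with hbot | hne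
  · simp [hbot]
  obtain ⟨y₀, hy₀⟩ := hne.nonempty_of_mem self_mem_nhdsWithin
  have hx₀ : x i₀ ∉ S := by simp [hS]
  have hdist_pos : ∀ i ≠ i₀, 0 < dist (x i₀) (x i) :=
    fun i hi => dist_pos.2 (hxdist.ne (Ne.symm hi))
  have hw₀ : Tendsto (fun y => θ (dist y (x i₀))) (𝓝[S] (x i₀)) atTop :=
    hθtop.comp (tendsto_dist_nhdsWithin_nhdsGT hx₀)
  have hw : ∀ i ≠ i₀, Tendsto (fun y => θ (dist y (x i))) (𝓝[S] (x i₀))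
      (𝓝 (θ (dist (x i₀) (x i)))) := fun i hi =>
    ((hθcont.continuousAt (Ioi_mem_nhds (hdist_pos i hi))).tendsto.comp
      ((continuous_id.dist continuous_const).tendsto _)).mono_left nhdsWithin_le_nhds
  have hmin_const : ∀ᶠ y in 𝓝[S] (x i₀), ∑ i, (eval (x i) (p y) - f i) ^ 2 * θ (dist y (x i)) ≤
      ∑ i, (f i₀ - f i) ^ 2 * θ (dist y (x i)) :=
    eventually_mem_nhdsWithin.mono fun y hy => by simpa using hmin y hy (C (f i₀)) (by simp)
  obtain ⟨hv₀, hvO⟩ := tendsto_and_isBigO_of_weighted_sq_le hw₀ hw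
    (fun i hi => hθpos _ (hdist_pos i hi)) hmin_const
  have hdiff := tendsto_eval_sub_eval_of_isBigO bb (mulVec_injective_of_isUnit_mul (hcond y₀ hy₀))
    nhdsWithin_le_nhds
    (eventually_mem_nhdsWithin.mono fun y hy => (mem_restrictTotalDegree _ _ _).2 (hdeg y hy)) hvO
  simpa using hdiff.add hv₀
end
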